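/- arXiv:0810.2965 — 2 statements merged into one kernel-verified Lean document; each statement's English description precedes it below -/
import Mathlib

section
/- For any rational number r/s (in lowest terms) that is not an integer multiple of 1/2, any point z₀ in the upper half-plane ℍ, and any matrix B₀ ∈ SL(2,ℝ), the average (1/s) ∑_{k=0}^{s-1} φ(B₀ · R_{rk/s} · z₀) equals φ(z₀) · φ(B₀ · i), where φ(z) = (1+|z|²)/(2 Im z) and R_θ is rotation by angle 2πθ acting by Möbius transformation. -/
noncomputable def phi (z : ℂ) : ℝ := (1 + ‖z‖ ^ 2) / (2 * z.im)

noncomputable def moeb (A : Matrix (Fin 2) (Fin 2) ℝ) (z : ℂ) : ℂ :=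
  ((A 0 0 : ℂ) * z + (A 0 1 : ℂ)) / ((A 1 0 : ℂ) * z + (A 1 1 : ℂ))

noncomputable def Rot (θ : ℝ) : Matrix (Fin 2) (Fin 2) ℝ :=
  !![Real.cos (2 * Real.pi * θ), -Real.sin (2 * Real.pi * θ);
     Real.sin (2 * Real.pi * θ),  Real.cos (2 * Real.pi * θ)]

/-!
For `A ∈ SL(2, ℝ)` one has `2 Im z · φ(A z) = |a z + b|² + |c z + d|²`, the squared norm of
`A (z, 1)`. Writing `(z, 1) = (z + i)/2 • (1, -i) + (z - i)/2 • (1, i)` in eigenvectors of `R_θ`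
(eigenvalues `e^{±2πiθ}`), the diagonal terms of `‖B R_θ (z, 1)‖²` do not depend on `θ` and add up
to `2 Im z · φ(z) φ(B i)`, while the cross term is the real part of a multiple of `e^{4πiθ}`.
Along `θ = r k / s` these exponentials are the powers of an `s`-th root of unity, which is not `1`
since `s ∤ 2 r`, so they sum to zero.
-/

open Complex ComplexConjugate Finset
open scoped MatrixGroups

lemma exp_two_pi_mul_I_mul_int_div_eq_one_iff {k : ℤ} {N : ℕ} (hN : N ≠ 0) :
    cexp (2 * Real.pi * I * k / N) = 1 ↔ (N : ℤ) ∣ k := by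
  rw [exp_eq_one_iff]
  conv in _ = _ => rw [← mul_comm (2 * Real.pi * I), mul_div_assoc, mul_right_inj' (by simp)]
  field_simp [Nat.cast_ne_zero.mpr hN]
  norm_cast

lemma geom_sum_eq_zero_of_pow_eq_one {K : Type*} [DivisionRing K] {ζ : K} {n : ℕ}
    (hζn : ζ ^ n = 1) (hζ : ζ ≠ 1) : ∑ i ∈ range n, ζ ^ i = 0 := by
  rw [geom_sum_eq hζ, hζn, sub_self, zero_div]

lemma sum_range_pow_exp_eq_zero {m : ℤ} {s : ℕ} (hs : s ≠ 0) (hm : ¬ (s : ℤ) ∣ m) :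
    ∑ k ∈ range s, cexp (2 * Real.pi * I * m / s) ^ k = 0 := by
  refine geom_sum_eq_zero_of_pow_eq_one ?_ ((exp_two_pi_mul_I_mul_int_div_eq_one_iff hs).not.2 hm)
  rw [← exp_nat_mul, ← exp_int_mul_two_pi_mul_I m]
  congr 1
  field_simp [Nat.cast_ne_zero.mpr hs]

lemma moeb_eq_coe_smul (A : SL(2, ℝ)) (τ : UpperHalfPlane) :
    moeb A τ = ↑(A • τ) := by
  simp [moeb, UpperHalfPlane.coe_specialLinearGroup_apply]

lemma moeb_moeb {A B : Matrix (Fin 2) (Fin 2) ℝ} (hA : A.det = 1) (hB : B.det = 1) {z : ℂ}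
    (hz : 0 < z.im) : moeb A (moeb B z) = moeb (A * B) z := by
  let g : SL(2, ℝ) := ⟨A, hA⟩
  let h : SL(2, ℝ) := ⟨B, hB⟩
  have hgh := congrArg UpperHalfPlane.coe (mul_smul g h ⟨z, hz⟩).symm
  simp only [← moeb_eq_coe_smul] at hgh
  exact hgh

lemma im_moeb {A : Matrix (Fin 2) (Fin 2) ℝ} (hA : A.det = 1) (z : ℂ) :
    (moeb A z).im = z.im / normSq (A 1 0 * z + A 1 1) := by
  rw [Matrix.det_fin_two] at hA
  rw [moeb, div_im, div_sub_div_same]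
  congr 1
  simp only [add_re, add_im, ofReal_re, ofReal_im, mul_re, mul_im]
  linear_combination z.im * hA

lemma phi_moeb {A : Matrix (Fin 2) (Fin 2) ℝ} (hA : A.det = 1) {z : ℂ} (hz : 0 < z.im) :
    phi (moeb A z) = (normSq (A 0 0 * z + A 0 1) + normSq (A 1 0 * z + A 1 1)) / (2 * z.im) := by
  have hden : normSq (A 1 0 * z + A 1 1) ≠ 0 := by
    let g : SL(2, ℝ) := ⟨A, hA⟩
    have h := (g • (⟨z, hz⟩ : UpperHalfPlane)).im_pos
    rw [← UpperHalfPlane.coe_im, ← moeb_eq_coe_smul, im_moeb hA] at h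
    exact fun h0 => by simp [h0] at h
  rw [phi, im_moeb hA, moeb, Complex.sq_norm, normSq_div]
  generalize normSq (A 1 0 * z + A 1 1) = D at hden ⊢
  field_simp
  ring

lemma det_Rot (θ : ℝ) : (Rot θ).det = 1 := by
  simp [Rot, Matrix.det_fin_two_of, ← sq, Real.cos_sq_add_sin_sq]

noncomputable def rotCoeff (B : Matrix (Fin 2) (Fin 2) ℝ) (z : ℂ) : ℂ :=
  (z + I) * (conj z + I) * ((B 0 0 - B 0 1 * I) ^ 2 + (B 1 0 - B 1 1 * I) ^ 2) / (4 * z.im)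

lemma phi_moeb_mul_Rot {B : Matrix (Fin 2) (Fin 2) ℝ} (hB : B.det = 1) {z : ℂ} (hz : 0 < z.im)
    (θ : ℝ) : phi (moeb (B * Rot θ) z)
      = phi z * phi (moeb B I) + (rotCoeff B z * cexp (4 * Real.pi * θ * I)).re := by
  rw [phi_moeb (by rw [Matrix.det_mul, hB, det_Rot, one_mul]) hz, phi_moeb hB (by simp), phi,
    Complex.sq_norm]
  have hexp : cexp (4 * Real.pi * θ * I) = cexp (↑(2 * (2 * Real.pi * θ)) * I) := by
    push_cast
    ring_nf
  rw [hexp, mul_re, exp_ofReal_mul_I_re, exp_ofReal_mul_I_im, Real.cos_two_mul', Real.sin_two_mul]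
  have hCS := Real.sin_sq_add_cos_sq (2 * Real.pi * θ)
  simp only [Rot, Matrix.mul_apply, Fin.sum_univ_two, Matrix.of_apply, Matrix.cons_val',
    Matrix.cons_val_zero, Matrix.cons_val_one, Matrix.empty_val', Matrix.cons_val_fin_one]
  generalize Real.cos (2 * Real.pi * θ) = C, Real.sin (2 * Real.pi * θ) = S at hCS ⊢
  have hy := hz.ne'
  simp only [rotCoeff, normSq_apply, div_re, div_im, mul_re, mul_im, add_re, add_im, sub_re,
    sub_im, conj_re, conj_im, ofReal_re, ofReal_im, I_re, I_im, re_ofNat, im_ofNat, pow_two,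
    mul_zero, zero_mul, mul_one, add_zero, zero_add, sub_zero, zero_sub, sub_self, neg_mul, zero_div]
  field_simp
  -- the `θ`-independent term is homogenised in `(C, S)` by `S ^ 2 + C ^ 2 = 1`
  linear_combination 4 * (1 + (z.re ^ 2 + z.im ^ 2)) *
    (B 0 1 ^ 2 + B 0 0 ^ 2 + (B 1 1 ^ 2 + B 1 0 ^ 2)) * hCS

theorem stmt0_general (r : ℤ) (s : ℕ) (hs : 0 < s)
    (hhalf : ¬ ((s : ℤ) ∣ 2 * r)) (z₀ : ℂ) (hz₀ : 0 < z₀.im)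
    (B₀ : Matrix (Fin 2) (Fin 2) ℝ) (hB₀ : B₀.det = 1) :
    (1 / (s : ℝ)) * ∑ k ∈ Finset.range s,
        phi (moeb B₀ (moeb (Rot ((r : ℝ) * (k : ℝ) / (s : ℝ))) z₀))
      = phi z₀ * phi (moeb B₀ Complex.I) := by
  have hterm : ∀ k : ℕ, phi (moeb B₀ (moeb (Rot (r * k / s)) z₀)) = phi z₀ * phi (moeb B₀ I)
      + (rotCoeff B₀ z₀ * cexp (2 * Real.pi * I * ↑(2 * r) / s) ^ k).re := by
    intro k
    rw [moeb_moeb hB₀ (det_Rot _) hz₀, phi_moeb_mul_Rot hB₀ hz₀, ← exp_nat_mul]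
    congr 4
    push_cast
    ring
  simp only [hterm, sum_add_distrib, sum_const, card_range, nsmul_eq_mul, ← re_sum, ← mul_sum,
    sum_range_pow_exp_eq_zero hs.ne' hhalf, mul_zero, zero_re, add_zero]
  field_simp

/-- Exact cancellation identity for elliptic averages (Lemma `cancellation`). -/
theorem stmt0 (r : ℤ) (s : ℕ) (hs : 0 < s) (hcop : Int.gcd r (s : ℤ) = 1)
    (hhalf : ¬ ((s : ℤ) ∣ 2 * r)) (z₀ : ℂ) (hz₀ : 0 < z₀.im)
    (B₀ : Matrix (Fin 2) (Fin 2) ℝ) (hB₀ : B₀.det = 1) :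
    (1 / (s : ℝ)) * ∑ k ∈ Finset.range s,
        phi (moeb B₀ (moeb (Rot ((r : ℝ) * (k : ℝ) / (s : ℝ))) z₀))
      = phi z₀ * phi (moeb B₀ Complex.I) :=
  stmt0_general r s hs hhalf z₀ hz₀ B₀ hB₀
end

section
/- Let α be irrational with continued fraction approximants p_n/q_n, and suppose β(α) = limsup (ln q_{n+1})/q_n = 0. Then for every ε₀ > 0 and every θ ∈ ℝ, for all sufficiently large |k|, the condition ‖2θ − kα‖_{ℝ/ℤ} ≤ e^{−|k|ε₀} implies ‖2θ − kα‖_{ℝ/ℤ} = min_{|j| ≤ |k|} ‖2θ − jα‖_{ℝ/ℤ}. -/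
/-- Distance to the nearest integer. -/
noncomputable def distZ (x : ℝ) : ℝ := |x - round x|

lemma distZ_le_abs_sub_int (x : ℝ) (n : ℤ) : distZ x ≤ |x - n| := by
  unfold distZ
  rcases eq_or_ne n (round x) with h | h
  · rw [h]
  · have h1 : (1 : ℝ) ≤ |(n : ℝ) - round x| := by
      have : (n : ℤ) - round x ≠ 0 := sub_ne_zero.mpr h
      have : (1 : ℤ) ≤ |n - round x| := Int.one_le_abs this
      calc (1:ℝ) = ((1:ℤ):ℝ) := by norm_num
        _ ≤ ((|n - round x| : ℤ) : ℝ) := by exact_mod_cast this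
        _ = |(n:ℝ) - round x| := by push_cast; ring_nf
    have h2 : |x - round x| ≤ 1/2 := abs_sub_round x
    have h3 : |(n:ℝ) - round x| ≤ |x - n| + |x - round x| := by
      calc |(n:ℝ) - round x| = |(x - round x) - (x - n)| := by ring_nf
        _ ≤ |x - round x| + |x - n| := abs_sub _ _
        _ = |x - n| + |x - round x| := by ring
    linarith

lemma distZ_nonneg (x : ℝ) : 0 ≤ distZ x := abs_nonneg _

lemma distZ_neg (x : ℝ) : distZ (-x) = distZ x := by
  apply le_antisymm
  · calc distZ (-x) ≤ |(-x) - (-round x : ℤ)| := distZ_le_abs_sub_int _ _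
      _ = |x - round x| := by push_cast; rw [← abs_neg]; ring_nf
      _ = distZ x := rfl
  · calc distZ x ≤ |x - (-round (-x) : ℤ)| := distZ_le_abs_sub_int _ _
      _ = |(-x) - round (-x)| := by push_cast; rw [← abs_neg]; ring_nf
      _ = distZ (-x) := rfl

lemma distZ_sub_le (x y : ℝ) : distZ (x - y) ≤ distZ x + distZ y := by
  calc distZ (x - y) ≤ |(x - y) - (round x - round y : ℤ)| := distZ_le_abs_sub_int _ _
    _ = |(x - round x) - (y - round y)| := by push_cast; ring_nf
    _ ≤ |x - round x| + |y - round y| := abs_sub _ _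
    _ = distZ x + distZ y := rfl

lemma distZ_pos_of_irrational {x : ℝ} (h : Irrational x) : 0 < distZ x := by
  rw [distZ, abs_pos, sub_ne_zero]
  exact fun he => (h ⟨round x, he.symm⟩)

/-- If β(α) = 0, then for every ε₀ > 0 and θ, for all sufficiently large |k|,
an exponentially small value of ‖2θ − kα‖ automatically makes k a minimizer
among all |j| ≤ |k|. -/
theorem stmt11 (α : ℝ) (hirr : Irrational α)
    (hβ : ∀ δ > (0 : ℝ), ∃ K : ℕ, ∀ k : ℕ, K ≤ k →
      Real.exp (-δ * k) ≤ distZ ((k : ℝ) * α)) :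
    ∀ ε₀ > (0 : ℝ), ∀ θ : ℝ, ∃ K : ℕ, ∀ k : ℤ, K ≤ k.natAbs →
      distZ (2 * θ - (k : ℝ) * α) ≤ Real.exp (-(k.natAbs : ℝ) * ε₀) →
      ∀ j : ℤ, |j| ≤ |k| →
        distZ (2 * θ - (k : ℝ) * α) ≤ distZ (2 * θ - (j : ℝ) * α) := by
  intro ε₀ hε₀ θ
  obtain ⟨K₀, hK₀⟩ := hβ (ε₀/4) (by linarith)
  set S : Finset ℕ := Finset.Icc 1 (K₀ + 1) with hS
  have hSne : S.Nonempty := ⟨1, by simp [hS]⟩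
  set c : ℝ := S.inf' hSne (fun m => distZ ((m : ℝ) * α)) with hc
  have hcpos : 0 < c := by
    rw [hc, Finset.lt_inf'_iff]
    intro m hm
    have hm1 : m ≠ 0 := by
      simp only [hS, Finset.mem_Icc] at hm; omega
    exact distZ_pos_of_irrational (hirr.natCast_mul hm1)
  have hcle : ∀ m ∈ S, c ≤ distZ ((m : ℝ) * α) := fun m hm => Finset.inf'_le _ hm
  refine ⟨max (⌈(2 * Real.log 2)/ε₀⌉₊ + 1) (⌈(Real.log (2/c))/ε₀⌉₊ + 1), ?_⟩
  intro k hk hsmall j hjk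
  by_contra hcon
  push_neg at hcon
  set n := k.natAbs with hn
  -- basic numeric facts about n
  have hn1 : (2 * Real.log 2)/ε₀ < (n : ℝ) := by
    have : ⌈(2 * Real.log 2)/ε₀⌉₊ < n := by omega
    calc (2 * Real.log 2)/ε₀ ≤ (⌈(2 * Real.log 2)/ε₀⌉₊ : ℝ) := Nat.le_ceil _
      _ < (n : ℝ) := by exact_mod_cast this
  have hn2 : (Real.log (2/c))/ε₀ < (n : ℝ) := by
    have : ⌈(Real.log (2/c))/ε₀⌉₊ < n := by omega
    calc (Real.log (2/c))/ε₀ ≤ (⌈(Real.log (2/c))/ε₀⌉₊ : ℝ) := Nat.le_ceil _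
      _ < (n : ℝ) := by exact_mod_cast this
  -- (ii): 2 exp(-nε₀) < exp(-nε₀/2)
  have hii : 2 * Real.exp (-(n:ℝ) * ε₀) < Real.exp (-(n:ℝ) * ε₀ / 2) := by
    have hlog : Real.log 2 < (n:ℝ) * ε₀ / 2 := by
      rw [div_lt_iff₀ hε₀] at hn1; nlinarith
    have h := Real.exp_lt_exp.mpr (show Real.log 2 + (-(n:ℝ) * ε₀) < -(n:ℝ) * ε₀ / 2 by linarith)
    rw [Real.exp_add, Real.exp_log (by norm_num : (0:ℝ) < 2)] at h
    linarith
  -- (i): 2 exp(-nε₀) < c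
  have hi : 2 * Real.exp (-(n:ℝ) * ε₀) < c := by
    have hlog : Real.log (2/c) < (n:ℝ) * ε₀ := by
      rw [div_lt_iff₀ hε₀] at hn2; linarith
    have : Real.exp (-(n:ℝ) * ε₀) < c / 2 := by
      rw [← Real.lt_log_iff_exp_lt (by positivity)]
      have := Real.log_div (by norm_num : (2:ℝ) ≠ 0) (ne_of_gt hcpos)
      have h2 := Real.log_div (ne_of_gt hcpos) (by norm_num : (2:ℝ) ≠ 0)
      linarith
    linarith
  -- set up d and m
  have hjknat : j.natAbs ≤ n := by
    rw [Int.abs_eq_natAbs, Int.abs_eq_natAbs] at hjk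
    exact_mod_cast hjk
  set d : ℤ := k - j with hd
  have hdne : d ≠ 0 := by
    intro h
    have : k = j := by omega
    rw [this] at hcon
    exact lt_irrefl _ hcon
  set m := d.natAbs with hm
  have hm1 : 1 ≤ m := Int.natAbs_pos.mpr hdne
  have hm2n : m ≤ 2 * n := by
    have := Int.natAbs_sub_le k j
    omega
  -- distZ (m α) = distZ (d α)
  have hmd : distZ ((m:ℝ) * α) = distZ ((d:ℝ) * α) := by
    have habs : ((m:ℝ)) = |(d:ℝ)| := by
      rw [hm, Nat.cast_natAbs]; push_cast; ring
    rcases abs_choice (d:ℝ) with h | h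
    · rw [habs, h]
    · rw [habs, h, neg_mul, distZ_neg]
  -- bound distZ (d α)
  have hdbound : distZ ((d:ℝ) * α) < 2 * Real.exp (-(n:ℝ) * ε₀) := by
    have heq : (d:ℝ) * α = (2 * θ - (j:ℝ) * α) - (2 * θ - (k:ℝ) * α) := by
      push_cast [hd]; ring
    calc distZ ((d:ℝ) * α) ≤ distZ (2 * θ - (j:ℝ) * α) + distZ (2 * θ - (k:ℝ) * α) := by
          rw [heq]; exact distZ_sub_le _ _
      _ < 2 * distZ (2 * θ - (k:ℝ) * α) := by linarith
      _ ≤ 2 * Real.exp (-(n:ℝ) * ε₀) := by linarith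
  rcases le_or_gt m (K₀ + 1) with hcase | hcase
  · -- small m: use c
    have hmem : m ∈ S := by simp [hS, Finset.mem_Icc]; omega
    have := hcle m hmem
    rw [hmd] at this
    linarith
  · -- large m: use hK₀
    have hK₀m : K₀ ≤ m := by omega
    have h1 := hK₀ m hK₀m
    have h2 : Real.exp (-(n:ℝ) * ε₀ / 2) ≤ Real.exp (-(ε₀/4) * m) := by
      rw [Real.exp_le_exp]
      have : (m:ℝ) ≤ 2 * n := by exact_mod_cast hm2n
      nlinarith
    rw [hmd] at h1
    linarith
end
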